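/- For 1/3 < r < 1, the quartic polynomial (in y) H(r,y) = −(14r + 18r³) + (2 + 40r² + 6r⁴)y + 2r(1 − r²)y² − 16r²y³ is strictly negative for all y ∈ [−1, 1]. -/
import Mathlib

/-- Numerator factor in the Schwarzian derivative of the off-center reflection. -/
noncomputable def H (r y : ℝ) : ℝ :=
  -(14 * r + 18 * r ^ 3) + (2 + 40 * r ^ 2 + 6 * r ^ 4) * y
    + 2 * r * (1 - r ^ 2) * y ^ 2 - 16 * r ^ 2 * y ^ 3

theorem stmt_4 (r : ℝ) (hr0 : 1 / 3 < r) (hr1 : r < 1)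
    (y : ℝ) (hy0 : -1 ≤ y) (hy1 : y ≤ 1) : H r y < 0 := by
  have h1 : (0:ℝ) < 1 - r := by linarith
  have h3 : (0:ℝ) < 3 * r - 1 := by linarith
  -- Q(y) = a1 + a2(y+1) + a3(y^2+y+1)
  set Q : ℝ := 2 + 40 * r ^ 2 + 6 * r ^ 4 + 2 * r * (1 - r ^ 2) * (y + 1)
      - 16 * r ^ 2 * (y ^ 2 + y + 1) with hQdef
  have hQm : (0:ℝ) < 2 + 24 * r ^ 2 + 6 * r ^ 4 := by nlinarith [sq_nonneg r, sq_nonneg (r^2)]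
  have hQp : (0:ℝ) < 2 * (r - 1) ^ 2 * (3 * r + 1) * (r + 1) := by
    have : (0:ℝ) < (r-1)^2 := by nlinarith [mul_pos h1 h1]
    nlinarith
  have hQ : 0 < Q := by
    nlinarith [mul_nonneg (by linarith : (0:ℝ) ≤ 1 - y) hQm.le,
      mul_nonneg (by linarith : (0:ℝ) ≤ 1 + y) hQp.le,
      mul_nonneg (mul_nonneg (by linarith : (0:ℝ) ≤ 1 - y) (by linarith : (0:ℝ) ≤ 1 + y)) (sq_nonneg r)]
  have hH1 : H r 1 < 0 := by
    have : H r 1 = -2 * ((1-r)^3 * (3*r-1)) := by unfold H; ring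
    rw [this]
    have := mul_pos (mul_pos (mul_pos h1 h1) h1) h3
    nlinarith
  have key : H r y = H r 1 + (y - 1) * Q := by unfold H; rw [hQdef]; ring
  have : (y - 1) * Q ≤ 0 := mul_nonpos_of_nonpos_of_nonneg (by linarith) hQ.le
  linarith [key ▸ (by linarith : H r 1 + (y-1)*Q < 0)]
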